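/- Let G be an ordered abelian group possessing a nontrivial convex divisible subgroup H. Then G is closed in its divisible hull. -/

import Mathlib

/-!
Write `n • x = f g₀` and pick `h' > 0` with `n • h' ∈ H`. If `f g` lies within `f h'` of `x`, then
`|n • g - g₀| < n • h'`, so by convexity `n • g - g₀ ∈ H`; dividing it by `n` inside `H` as
`n • k` gives `n • f (g - k) = n • x`, hence `x = f (g - k)` because `D` is torsion-free.
-/

open Set

section

variable {G : Type*} [AddCommGroup G] [LinearOrder G] [IsOrderedAddMonoid G]

theorem AddSubgroup.exists_pos_mem_of_ne_bot {H : AddSubgroup G} (hH : H ≠ ⊥) :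
    ∃ h ∈ H, 0 < h := by
  obtain ⟨a, haH, ha⟩ := H.bot_or_exists_ne_zero.resolve_left hH
  exact ⟨|a|, abs_mem_iff.mpr haH, abs_pos.mpr ha⟩

theorem AddSubgroup.mem_of_abs_le {H : AddSubgroup G}
    (hconv : ∀ a b : G, b ∈ H → 0 ≤ a → a ≤ b → a ∈ H) {a b : G} (hb : b ∈ H) (hab : |a| ≤ b) :
    a ∈ H :=
  abs_mem_iff.mp (hconv _ _ hb (abs_nonneg a) hab)

variable {D : Type*} [AddCommGroup D] [LinearOrder D] [IsOrderedAddMonoid D]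

theorem abs_lt_of_abs_map_lt {f : G →+ D} (hf : StrictMono f) {a b : G} (h : |f a| < f b) :
    |a| < b := by
  rw [abs_lt, ← map_neg] at h
  exact abs_lt.mpr ⟨hf.lt_iff_lt.mp h.1, hf.lt_iff_lt.mp h.2⟩

theorem mem_range_of_abs_sub_lt {f : G →+ D} (hf : StrictMono f) {H : AddSubgroup G}
    (hconv : ∀ a b : G, b ∈ H → 0 ≤ a → a ≤ b → a ∈ H) {n : ℕ} (hn : n ≠ 0)
    (hdiv : ∀ h ∈ H, ∃ k ∈ H, n • k = h) {x : D} {g₀ : G} (hx : n • x = f g₀) {h : G}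
    (hh : n • h ∈ H) {g : G} (hg : |f g - x| < f h) : x ∈ range f := by
  have hclose : |n • g - g₀| < n • h := by
    refine abs_lt_of_abs_map_lt hf ?_
    rw [map_sub, map_nsmul, map_nsmul, ← hx, ← nsmul_sub, abs_nsmul]
    exact nsmul_lt_nsmul_right hn hg
  obtain ⟨k, -, hk⟩ := hdiv _ (H.mem_of_abs_le hconv hh hclose.le)
  refine ⟨g - k, (nsmul_right_inj hn).mp ?_⟩
  rw [← map_nsmul, nsmul_sub, hk, sub_sub_cancel, hx]

end

theorem stmt_4_general {G D : Type*} [AddCommGroup G] [LinearOrder G] [IsOrderedAddMonoid G]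
    [AddCommGroup D] [LinearOrder D] [IsOrderedAddMonoid D]
    (f : G →+ D) (hf : StrictMono f)
    (hhull : ∀ d : D, ∃ (n : ℕ) (g : G), 0 < n ∧ n • d = f g)
    (H : AddSubgroup G) (hH : H ≠ ⊥)
    (hconv : ∀ a b : G, b ∈ H → 0 ≤ a → a ≤ b → a ∈ H)
    (hdiv : ∀ (n : ℕ), 0 < n → ∀ h ∈ H, ∃ h' ∈ H, n • h' = h) :
    ∀ x : D, x ∉ Set.range f →
      ∃ a b : D, a < x ∧ x < b ∧ ∀ g : G, f g ∉ Set.Ioo a b := by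
  intro x hx
  obtain ⟨h, hhH, hh⟩ := AddSubgroup.exists_pos_mem_of_ne_bot hH
  obtain ⟨n, g₀, hn, hng₀⟩ := hhull x
  obtain ⟨h', -, rfl⟩ := hdiv n hn h hhH
  have hfh' : 0 < f h' := by simpa using hf ((nsmul_pos_iff hn.ne').mp hh)
  refine ⟨x - f h', x + f h', sub_lt_self x hfh', lt_add_of_pos_right x hfh', fun g hg => hx ?_⟩
  exact mem_range_of_abs_sub_lt hf hconv hn.ne' (hdiv n hn) hng₀ hhH
    (abs_sub_lt_iff.mpr ⟨sub_lt_iff_lt_add'.mpr hg.2, sub_lt_comm.mp hg.1⟩)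

/-- Let `G` be an ordered abelian group possessing a nontrivial convex divisible subgroup `H`.
Then `G` is closed in its divisible hull `D` (modelled as a divisible ordered abelian group
`D` with an order-embedding `f : G →+ D` such that every element of `D` has a positive
multiple in the image of `f`): no element of `D` outside the image of `G` is a limit point
of `G`. -/
theorem stmt_4 {G D : Type*} [AddCommGroup G] [LinearOrder G] [IsOrderedAddMonoid G]
    [AddCommGroup D] [LinearOrder D] [IsOrderedAddMonoid D]
    (f : G →+ D) (hf : StrictMono f)
    (hdivD : ∀ (d : D) (n : ℕ), 0 < n → ∃ e : D, n • e = d)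
    (hhull : ∀ d : D, ∃ (n : ℕ) (g : G), 0 < n ∧ n • d = f g)
    (H : AddSubgroup G) (hH : H ≠ ⊥)
    (hconv : ∀ a b : G, b ∈ H → 0 ≤ a → a ≤ b → a ∈ H)
    (hdiv : ∀ (n : ℕ), 0 < n → ∀ h ∈ H, ∃ h' ∈ H, n • h' = h) :
    ∀ x : D, x ∉ Set.range f →
      ∃ a b : D, a < x ∧ x < b ∧ ∀ g : G, f g ∉ Set.Ioo a b :=
  stmt_4_general f hf hhull H hH hconv hdiv
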